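/- arXiv:1202.2824 — 2 statements merged into one kernel-verified Lean document; each statement's English description precedes it below -/
import Mathlib

section
/- Let f ∈ L¹_loc(ℝⁿ) be nonnegative, Ω_k = {M^d f > 2^{(n+1)k}} = ∪_j Q_j^k its decomposition into maximal dyadic cubes, and E_j^k = Q_j^k \ Ω_{k+1}. Then for a.e. x, M^d f(x) ≤ 2^{n+1} Σ_{k,j} f_{Q_j^k} χ_{E_j^k}(x), where f_Q = (1/|Q|)∫_Q f. -/
open Set MeasureTheory ENNReal

/-- The standard dyadic cube `2^{-k}([0,1)ⁿ + j)`. -/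
def dCube {n : ℕ} (k : ℤ) (j : Fin n → ℤ) : Set (Fin n → ℝ) :=
  {x | ∀ i, (2:ℝ)^(-k) * (j i : ℝ) ≤ x i ∧ x i < (2:ℝ)^(-k) * ((j i : ℝ) + 1)}

/-- The average `(1/|S|) ∫_S f` of a nonnegative function, as an extended real. -/
noncomputable def eavg {n : ℕ} (f : (Fin n → ℝ) → ℝ) (S : Set (Fin n → ℝ)) : ℝ≥0∞ :=
  (∫⁻ x in S, ENNReal.ofReal (f x)) / volume S

/-- The dyadic maximal operator `M^d f(x) = sup_{x ∈ Q ∈ D} (1/|Q|) ∫_Q f`. -/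
noncomputable def Md {n : ℕ} (f : (Fin n → ℝ) → ℝ) (x : Fin n → ℝ) : ℝ≥0∞ :=
  ⨆ (k : ℤ) (j : Fin n → ℤ) (_ : x ∈ dCube k j), eavg f (dCube k j)

/-!
Off the exceptional set `⋂ₖ Ωₖ`, a point `x` with `M^d f x > 0` has a largest `k` with `x ∈ Ωₖ`, so
`x ∈ Eⱼᵏ` for the maximal cube `Qⱼᵏ ∋ x`, and
`M^d f x ≤ 2^{(n+1)(k+1)} = 2^{n+1} 2^{(n+1)k} < 2^{n+1} f_{Qⱼᵏ}`.
The exceptional set is null: inside a maximal cube `Q` of `Ω₀`, the maximal cubes of `Ωₖ` (`k ≥ 0`)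
meeting `Q` are pairwise disjoint subcubes of `Q` with averages above `2^{(n+1)k}`, so
`2^{(n+1)k} |Q ∩ ⋂ₖ Ωₖ| ≤ ∫_Q f < ∞` for every `k ≥ 0`.
-/

section DyadicCubes

variable {n : ℕ}

theorem mem_dCube_iff {k : ℤ} {j : Fin n → ℤ} {x : Fin n → ℝ} :
    x ∈ dCube k j ↔ ∀ i, ⌊(2:ℝ) ^ k * x i⌋ = j i := by
  have h2 : (0:ℝ) < 2 ^ k := zpow_pos two_pos k
  simp only [dCube, mem_ofPred_eq, Int.floor_eq_iff, zpow_neg, inv_mul_le_iff₀ h2,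
    lt_inv_mul_iff₀ h2]

theorem floor_two_zpow_mul_eq_div (K : ℤ) (m : ℕ) (y : ℝ) :
    ⌊(2:ℝ) ^ K * y⌋ = ⌊(2:ℝ) ^ (K + m) * y⌋ / (2 ^ m : ℕ) := by
  rw [← Int.floor_div_natCast, zpow_add₀ two_ne_zero, zpow_natCast]
  push_cast
  field_simp

theorem dCube_subset_of_le {K K' : ℤ} {J J' : Fin n → ℤ} {x : Fin n → ℝ} (hK : K' ≤ K)
    (hx : x ∈ dCube K J) (hx' : x ∈ dCube K' J') : dCube K J ⊆ dCube K' J' := by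
  obtain ⟨m, rfl⟩ : ∃ m : ℕ, K = K' + m := ⟨(K - K').toNat, by omega⟩
  intro y hy
  rw [mem_dCube_iff] at hx hx' hy ⊢
  intro i
  rw [floor_two_zpow_mul_eq_div, hy i, ← hx i, ← floor_two_zpow_mul_eq_div, hx' i]

theorem dCube_subset_or_subset {K K' : ℤ} {J J' : Fin n → ℤ} {x : Fin n → ℝ}
    (hx : x ∈ dCube K J) (hx' : x ∈ dCube K' J') :
    dCube K J ⊆ dCube K' J' ∨ dCube K' J' ⊆ dCube K J :=
  (le_total K' K).imp (dCube_subset_of_le · hx hx') (dCube_subset_of_le · hx' hx)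

theorem measurableSet_dCube (k : ℤ) (j : Fin n → ℤ) : MeasurableSet (dCube (n := n) k j) := by
  simp only [dCube, ofPred_forall]
  exact .iInter fun i => (measurableSet_le measurable_const (measurable_pi_apply i)).inter
    (measurableSet_lt (measurable_pi_apply i) measurable_const)

theorem lintegral_dCube_lt_top {f : (Fin n → ℝ) → ℝ} (hf : LocallyIntegrable f)
    (k : ℤ) (j : Fin n → ℤ) : ∫⁻ x in dCube k j, ENNReal.ofReal (f x) < ∞ := by
  have hsub : dCube k j ⊆ Icc (fun i => (2:ℝ) ^ (-k) * j i) (fun i => (2:ℝ) ^ (-k) * (j i + 1)) :=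
    fun x hx => ⟨fun i => (hx i).1, fun i => (hx i).2.le⟩
  exact ((hf.integrableOn_isCompact isCompact_Icc).mono_set hsub).setLIntegral_lt_top

end DyadicCubes

theorem MeasureTheory.Measure.mul_measure_sUnion_le {α : Type*} [MeasurableSpace α]
    {μ ν : Measure α} {S : Set (Set α)} {t : ℝ≥0∞} (hS : S.Countable)
    (hd : S.Pairwise Disjoint) (hm : ∀ C ∈ S, MeasurableSet C) (h : ∀ C ∈ S, t * μ C ≤ ν C) :
    t * μ (⋃₀ S) ≤ ν (⋃₀ S) := by
  have := hS.to_subtype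
  calc t * μ (⋃₀ S) ≤ t * ∑' C : S, μ C := by
        gcongr; rw [sUnion_eq_iUnion]; exact measure_iUnion_le _
    _ = ∑' C : S, t * μ C := ENNReal.tsum_mul_left.symm
    _ ≤ ∑' C : S, ν C := ENNReal.tsum_le_tsum fun C => h C C.2
    _ = ν (⋃₀ S) := (measure_sUnion hS hd hm).symm

theorem Int.exists_mem_and_notMem_add_one {α : Type*} {s : ℤ → Set α} (hs : Antitone s)
    {x : α} (h₁ : ∃ k, x ∈ s k) (h₂ : ∃ k, x ∉ s k) : ∃ k, x ∈ s k ∧ x ∉ s (k + 1) := by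
  obtain ⟨k₀, hk₀⟩ := h₂
  have hbdd : ∃ b : ℤ, ∀ k, x ∈ s k → k ≤ b :=
    ⟨k₀, fun k hk => le_of_not_ge fun hle => hk₀ (hs hle hk)⟩
  obtain ⟨k, hk, hmax⟩ := Int.exists_greatest_of_bdd hbdd h₁
  exact ⟨k, hk, fun hk' => by have := hmax _ hk'; omega⟩

namespace ENNReal

theorem natCast_lt_two_zpow_mul (m N : ℕ) : (N : ℝ≥0∞) < 2 ^ (((m : ℤ) + 1) * N) :=
  calc (N : ℝ≥0∞) < 2 ^ N := by exact_mod_cast N.lt_two_pow_self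
    _ = 2 ^ (N : ℤ) := (zpow_natCast _ _).symm
    _ ≤ 2 ^ (((m : ℤ) + 1) * N) := ENNReal.zpow_le_of_le one_le_two (by nlinarith)

theorem exists_lt_two_zpow_mul (m : ℕ) {c : ℝ≥0∞} (hc : c ≠ ∞) :
    ∃ k : ℤ, c < 2 ^ (((m : ℤ) + 1) * k) := by
  obtain ⟨N, hN⟩ := ENNReal.exists_nat_gt hc
  exact ⟨N, hN.trans (natCast_lt_two_zpow_mul m N)⟩

theorem exists_two_zpow_mul_lt (m : ℕ) {c : ℝ≥0∞} (hc : c ≠ 0) :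
    ∃ k : ℤ, 2 ^ (((m : ℤ) + 1) * k) < c := by
  obtain ⟨N, hN⟩ := ENNReal.exists_inv_nat_lt hc
  refine ⟨-N, lt_of_le_of_lt ?_ hN⟩
  rw [mul_neg, ENNReal.zpow_neg, ENNReal.inv_le_inv]
  exact (natCast_lt_two_zpow_mul m N).le

theorem monotone_two_zpow_mul (m : ℕ) : Monotone fun k : ℤ => (2 : ℝ≥0∞) ^ (((m : ℤ) + 1) * k) :=
  fun _ _ h => ENNReal.zpow_le_of_le one_le_two (by nlinarith)

theorem two_zpow_mul_add_one (m : ℕ) (k : ℤ) :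
    (2 : ℝ≥0∞) ^ (((m : ℤ) + 1) * (k + 1)) = 2 ^ (m + 1) * 2 ^ (((m : ℤ) + 1) * k) := by
  rw [mul_add_one, ENNReal.zpow_add two_ne_zero ofNat_ne_top, mul_comm]
  exact_mod_cast rfl

end ENNReal

section MaximalCubes

variable {n : ℕ} {f : (Fin n → ℝ) → ℝ}

/-- A Calderón–Zygmund cube of `f` at height `t`. -/
def IsMaximalDyadicCube (f : (Fin n → ℝ) → ℝ) (t : ℝ≥0∞) (C : Set (Fin n → ℝ)) : Prop :=
  ∃ (K : ℤ) (J : Fin n → ℤ), C = dCube K J ∧ t < eavg f (dCube K J) ∧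
    ∀ (K' : ℤ) (J' : Fin n → ℤ), dCube K J ⊆ dCube K' J' →
      dCube (n := n) K J ≠ dCube K' J' → eavg f (dCube K' J') ≤ t

namespace IsMaximalDyadicCube

variable {t t' : ℝ≥0∞} {C C' : Set (Fin n → ℝ)}

theorem measurableSet (hC : IsMaximalDyadicCube f t C) : MeasurableSet C := by
  obtain ⟨K, J, rfl, -⟩ := hC
  exact measurableSet_dCube K J

theorem mul_volume_le_lintegral (hC : IsMaximalDyadicCube f t C) :
    t * volume C ≤ ∫⁻ x in C, ENNReal.ofReal (f x) := by
  obtain ⟨K, J, rfl, hlt, -⟩ := hC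
  exact ENNReal.mul_le_of_le_div hlt.le

theorem subset_of_le (hC : IsMaximalDyadicCube f t C) (hC' : IsMaximalDyadicCube f t' C')
    (htt' : t ≤ t') {x : Fin n → ℝ} (hx : x ∈ C) (hx' : x ∈ C') : C' ⊆ C := by
  obtain ⟨K, J, rfl, -, hmax⟩ := hC
  obtain ⟨K', J', rfl, hlt', -⟩ := hC'
  rcases dCube_subset_or_subset hx' hx with hsub | hsub
  · exact hsub
  by_cases heq : dCube (n := n) K J = dCube K' J'
  · exact heq.symm.subset
  · exact absurd (hmax K' J' hsub heq) (not_le.2 (htt'.trans_lt hlt'))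

theorem eq_of_mem (hC : IsMaximalDyadicCube f t C) (hC' : IsMaximalDyadicCube f t C')
    {x : Fin n → ℝ} (hx : x ∈ C) (hx' : x ∈ C') : C = C' :=
  (hC'.subset_of_le hC le_rfl hx' hx).antisymm (hC.subset_of_le hC' le_rfl hx hx')

end IsMaximalDyadicCube

theorem volume_iInter_iUnion_eq_zero_of_isMaximalDyadicCube (hf : LocallyIntegrable f)
    {t : ℤ → ℝ≥0∞} (ht : Monotone t) (ht_unbounded : ∀ c ≠ ∞, ∃ k, c < t k)
    {Q : ℤ → ℕ → Set (Fin n → ℝ)} (hQ : ∀ k j, Q k j = ∅ ∨ IsMaximalDyadicCube f (t k) (Q k j)) :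
    volume (⋂ k, ⋃ j, Q k j) = 0 := by
  set N := ⋂ k, ⋃ j, Q k j
  have hN : N ⊆ ⋃ j, N ∩ Q 0 j := fun x hx => by
    simpa [← inter_iUnion, hx] using mem_iInter.1 hx 0
  refine measure_mono_null hN (measure_iUnion_null fun j₀ => ?_)
  rcases hQ 0 j₀ with h | hC₀
  · simp [h]
  set ν := volume.withDensity fun x => ENNReal.ofReal (f x)
  have hI : ν (Q 0 j₀) ≠ ∞ := by
    rw [withDensity_apply _ hC₀.measurableSet]
    obtain ⟨K₀, J₀, hKJ₀, -⟩ := hC₀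
    rw [hKJ₀]
    exact (lintegral_dCube_lt_top hf K₀ J₀).ne
  have hbound : ∀ k, 0 ≤ k → t k * volume (N ∩ Q 0 j₀) ≤ ν (Q 0 j₀) := by
    intro k hk
    set S := {C | C ∈ range (Q k) ∧ IsMaximalDyadicCube f (t k) C ∧ C ⊆ Q 0 j₀}
    have hS : S.Countable := (countable_range (Q k)).mono fun _ hC => hC.1
    have hS_disjoint : S.Pairwise Disjoint := fun C hC C' hC' hne =>
      disjoint_left.2 fun x hx hx' => hne (hC.2.1.eq_of_mem hC'.2.1 hx hx')
    have hS_measurable : ∀ C ∈ S, MeasurableSet C := fun C hC => hC.2.1.measurableSet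
    have hS_le : ∀ C ∈ S, t k * volume C ≤ ν C := fun C hC => by
      rw [withDensity_apply _ (hS_measurable C hC)]
      exact hC.2.1.mul_volume_le_lintegral
    have hS_cover : N ∩ Q 0 j₀ ⊆ ⋃₀ S := by
      rintro x ⟨hxN, hx₀⟩
      obtain ⟨j, hxj⟩ := mem_iUnion.1 (mem_iInter.1 hxN k)
      rcases hQ k j with h | h
      · simp [h] at hxj
      exact ⟨Q k j, ⟨mem_range_self j, h, hC₀.subset_of_le h (ht hk) hx₀ hxj⟩, hxj⟩
    calc t k * volume (N ∩ Q 0 j₀) ≤ t k * volume (⋃₀ S) := by gcongr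
      _ ≤ ν (⋃₀ S) := Measure.mul_measure_sUnion_le hS hS_disjoint hS_measurable hS_le
      _ ≤ ν (Q 0 j₀) := measure_mono (sUnion_subset fun C hC => hC.2.2)
  by_contra hpos
  obtain ⟨k, hk⟩ := ht_unbounded (ν (Q 0 j₀) / volume (N ∩ Q 0 j₀)) (ENNReal.div_ne_top hI hpos)
  have hk' := hk.trans_le (ht (le_max_left k 0))
  rw [ENNReal.div_lt_iff (.inl hpos) (.inr hI)] at hk'
  exact (hbound _ (le_max_right k 0)).not_gt hk'

end MaximalCubes

theorem stmt7_general {n : ℕ} (f : (Fin n → ℝ) → ℝ) (hf : LocallyIntegrable f)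
    (Q : ℤ → ℕ → Set (Fin n → ℝ))
    (hQ : ∀ k j, Q k j = ∅ ∨ ∃ (K : ℤ) (J : Fin n → ℤ), Q k j = dCube K J ∧
      (2:ℝ≥0∞)^(((n:ℤ)+1)*k) < eavg f (dCube K J) ∧
      ∀ (K' : ℤ) (J' : Fin n → ℤ), dCube K J ⊆ dCube K' J' →
        dCube (n := n) K J ≠ dCube K' J' →
        eavg f (dCube K' J') ≤ (2:ℝ≥0∞)^(((n:ℤ)+1)*k))
    (hcover : ∀ k : ℤ, {x | (2:ℝ≥0∞)^(((n:ℤ)+1)*k) < Md f x} = ⋃ j, Q k j) :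
    ∀ᵐ x ∂volume, Md f x ≤ (2:ℝ≥0∞)^(n+1) *
      ∑' (p : ℤ × ℕ),
        (Q p.1 p.2 \ ⋃ j, Q (p.1+1) j).indicator (fun _ => eavg f (Q p.1 p.2)) x := by
  have hnull := volume_iInter_iUnion_eq_zero_of_isMaximalDyadicCube hf (monotone_two_zpow_mul n)
    (fun _ => exists_lt_two_zpow_mul n) hQ
  filter_upwards [measure_eq_zero_iff_ae_notMem.1 hnull] with x hx
  rcases eq_or_ne (Md f x) 0 with h0 | h0
  · simp [h0]
  simp only [← hcover, mem_iInter, not_forall] at hx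
  have hanti : Antitone fun k : ℤ => {y | (2:ℝ≥0∞) ^ (((n:ℤ)+1) * k) < Md f y} :=
    fun _ _ hab _ hy => (monotone_two_zpow_mul n hab).trans_lt hy
  obtain ⟨k, hxk, hxk'⟩ :=
    Int.exists_mem_and_notMem_add_one hanti (exists_two_zpow_mul_lt n h0) hx
  rw [hcover] at hxk
  obtain ⟨j, hxj⟩ := mem_iUnion.1 hxk
  obtain ⟨K, J, hQkj, hlt, -⟩ := (hQ k j).resolve_left (nonempty_of_mem hxj).ne_empty
  have hxE : x ∈ Q k j \ ⋃ j', Q (k+1) j' := ⟨hxj, by rwa [← hcover]⟩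
  calc Md f x ≤ (2:ℝ≥0∞) ^ (((n:ℤ)+1) * (k+1)) := not_lt.1 hxk'
    _ = 2 ^ (n+1) * 2 ^ (((n:ℤ)+1) * k) := two_zpow_mul_add_one n k
    _ ≤ 2 ^ (n+1) * eavg f (Q k j) := by rw [hQkj]; gcongr
    _ = 2 ^ (n+1) * (Q k j \ ⋃ j', Q (k+1) j').indicator (fun _ => eavg f (Q k j)) x := by
      rw [indicator_of_mem hxE]
    _ ≤ _ := by gcongr; exact ENNReal.le_tsum (k, j)

/-- Let `f ≥ 0` be locally integrable and let `Ω_k = {M^d f > 2^{(n+1)k}} = ∪_j Q_j^k` be the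
decomposition of `Ω_k` into maximal dyadic cubes, `E_j^k = Q_j^k \ Ω_{k+1}`. Then for
a.e. `x`, `M^d f(x) ≤ 2^{n+1} Σ_{k,j} f_{Q_j^k} χ_{E_j^k}(x)`. -/
theorem stmt7 {n : ℕ} (f : (Fin n → ℝ) → ℝ) (hf : LocallyIntegrable f)
    (hf0 : ∀ x, 0 ≤ f x) (Q : ℤ → ℕ → Set (Fin n → ℝ))
    (hQ : ∀ k j, Q k j = ∅ ∨ ∃ (K : ℤ) (J : Fin n → ℤ), Q k j = dCube K J ∧
      (2:ℝ≥0∞)^(((n:ℤ)+1)*k) < eavg f (dCube K J) ∧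
      ∀ (K' : ℤ) (J' : Fin n → ℤ), dCube K J ⊆ dCube K' J' →
        dCube (n := n) K J ≠ dCube K' J' →
        eavg f (dCube K' J') ≤ (2:ℝ≥0∞)^(((n:ℤ)+1)*k))
    (hcover : ∀ k : ℤ, {x | (2:ℝ≥0∞)^(((n:ℤ)+1)*k) < Md f x} = ⋃ j, Q k j) :
    ∀ᵐ x ∂volume, Md f x ≤ (2:ℝ≥0∞)^(n+1) *
      ∑' (p : ℤ × ℕ),
        (Q p.1 p.2 \ ⋃ j, Q (p.1+1) j).indicator (fun _ => eavg f (Q p.1 p.2)) x :=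
  stmt7_general f hf Q hQ hcover
end

section
/- Let {Q_j^k} be a sparse family of cubes in a dyadic grid D and define the sparse operator A f = Σ_{k,j} f_{Q_j^k} χ_{Q_j^k}, where f_Q = (1/|Q|)∫_Q f. Then for nonnegative f, g ∈ L²(ℝⁿ): ∫ (A f) g dx ≤ 2 ∫ (M f)(M g) dx, where M is the Hardy–Littlewood maximal operator. Consequently ‖A f‖_{L²} ≤ C(n) ‖f‖_{L²}. -/
/-!
For `Q = Q_j^k` put `E_Q = Q \ Ω_{k+1}`: these sets are pairwise disjoint and `|Q| ≤ 2 |E_Q|`.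
Hence `∫ (A f) g = Σ_Q f_Q g_Q |Q| ≤ 2 Σ_Q ∫_{E_Q} f_Q g_Q ≤ 2 ∫ F G` for any `F`, `G` dominating
the averages of `f`, `g` on the cubes, e.g. `F = M f`, `G = M g`.

For the `L²` bound take instead the maximal function `M'` over the cubes of the family itself.
As these cubes are pairwise nested or disjoint, the maximal ones among those where `f` averages more
than `λ` cover `{M' f > λ}` disjointly, which gives the weak type estimate
`λ |{M' f > λ}| ≤ 2 ∫_{2f > λ} f`; summing it over `λ = 2^i` bounds `M'` on `L²`. Testing `A f`
against a finite truncation `A_s f` of itself then gives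
`‖A_s f‖₂² ≤ 2 ‖M' f‖₂ ‖M' (A_s f)‖₂ ≤ C ‖f‖₂ ‖A_s f‖₂`, and `‖A_s f‖₂ < ∞` can be cancelled.
-/

open Set MeasureTheory ENNReal NNReal

/-- The cube `a + [0, ℓ)ⁿ`. -/
def cubeOf {n : ℕ} (a : Fin n → ℝ) (ℓ : ℝ) : Set (Fin n → ℝ) :=
  {y | ∀ i, a i ≤ y i ∧ y i < a i + ℓ}

/-- A general dyadic grid: a collection of cubes of sidelengths `2^k` which are pairwise
nested or disjoint and such that the cubes of each fixed sidelength cover `ℝⁿ`. -/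
structure IsDyadicGrid {n : ℕ} (D : Set (Set (Fin n → ℝ))) : Prop where
  cube : ∀ Q ∈ D, ∃ (a : Fin n → ℝ) (k : ℤ), Q = cubeOf a ((2:ℝ)^k)
  nested : ∀ Q ∈ D, ∀ R ∈ D, Q ⊆ R ∨ R ⊆ Q ∨ Q ∩ R = ∅
  covers : ∀ (k : ℤ) (x : Fin n → ℝ), ∃ Q ∈ D, (∃ a, Q = cubeOf a ((2:ℝ)^k)) ∧ x ∈ Q

/-- A sparse family `{Q_j^k}` of cubes from the grid `D`: the cubes at each level `k` are
pairwise disjoint, `Ω_{k+1} ⊆ Ω_k` for `Ω_k = ∪_j Q_j^k`, and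
`|Ω_{k+1} ∩ Q_j^k| ≤ |Q_j^k|/2`. -/
structure IsSparseIn {n : ℕ} (D : Set (Set (Fin n → ℝ))) (Q : ℤ → ℕ → Set (Fin n → ℝ)) :
    Prop where
  mem : ∀ k j, Q k j ∈ D ∨ Q k j = ∅
  disj : ∀ k, ∀ j j', j ≠ j' → Disjoint (Q k j) (Q k j')
  nest : ∀ k, (⋃ j, Q (k+1) j) ⊆ ⋃ j, Q k j
  sparse : ∀ k j, volume ((⋃ i, Q (k+1) i) ∩ Q k j) ≤ volume (Q k j) / 2

/-- The sparse operator `A f = Σ_{k,j} f_{Q_j^k} χ_{Q_j^k}`. -/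
noncomputable def sparseOp {n : ℕ} (Q : ℤ → ℕ → Set (Fin n → ℝ))
    (f : (Fin n → ℝ) → ℝ≥0∞) (x : Fin n → ℝ) : ℝ≥0∞ :=
  ∑' p : ℤ × ℕ,
    (Q p.1 p.2).indicator (fun _ => (∫⁻ y in Q p.1 p.2, f y) / volume (Q p.1 p.2)) x

/-- The Hardy–Littlewood maximal operator over cubes. -/
noncomputable def MHL {n : ℕ} (f : (Fin n → ℝ) → ℝ≥0∞) (x : Fin n → ℝ) : ℝ≥0∞ :=
  ⨆ (a : Fin n → ℝ) (ℓ : ℝ) (_ : 0 < ℓ) (_ : x ∈ cubeOf a ℓ),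
    (∫⁻ y in cubeOf a ℓ, f y) / volume (cubeOf a ℓ)


open Function

lemma tsum_ite_two_zpow_le (m : ℤ) :
    ∑' i : ℤ, (if i ≤ m then (2:ℝ≥0∞) ^ i else 0) = 2 ^ (m + 1) := by
  have hinj : Injective fun j : ℕ => m - j := fun a b h => by simpa using h
  have hsupp : support (fun i : ℤ => if i ≤ m then (2:ℝ≥0∞) ^ i else 0) ⊆
      range fun j : ℕ => m - j := by
    intro i hi
    have him : i ≤ m := by by_contra h; simp [h] at hi
    exact ⟨(m - i).toNat, by simp only; omega⟩
  rw [← hinj.tsum_eq hsupp]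
  calc ∑' j : ℕ, (if m - (j:ℤ) ≤ m then (2:ℝ≥0∞) ^ (m - (j:ℤ)) else 0)
      = ∑' j : ℕ, 2 ^ m * 2⁻¹ ^ j := by
        refine tsum_congr fun j => ?_
        rw [if_pos (by omega), ENNReal.zpow_sub two_ne_zero ofNat_ne_top, zpow_natCast,
          ENNReal.inv_pow]
    _ = 2 ^ (m + 1) := by
        rw [ENNReal.tsum_mul_left, ENNReal.tsum_geometric, ENNReal.one_sub_inv_two, inv_inv,
          ENNReal.zpow_add two_ne_zero ofNat_ne_top, zpow_one]

lemma sq_le_tsum_ite_two_zpow_lt (y : ℝ≥0∞) :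
    y ^ 2 ≤ ∑' i : ℤ, if (2:ℝ≥0∞) ^ i < y then 2 ^ (2 * i + 2) else 0 := by
  rcases eq_or_ne y 0 with rfl | h0
  · simp
  rcases eq_or_ne y ∞ with rfl | htop
  · refine le_of_eq_of_le (ENNReal.tsum_const_eq_top_of_ne_zero (α := ℕ) one_ne_zero).symm
      (le_trans ?_ (ENNReal.tsum_comp_le_tsum_of_injective Nat.cast_injective _))
    refine ENNReal.tsum_le_tsum fun i : ℕ => ?_
    rw [if_pos (ENNReal.zpow_lt_top two_ne_zero ofNat_ne_top _),
      show 2 * (i : ℤ) + 2 = ((2 * i + 2 : ℕ) : ℤ) by push_cast; ring, zpow_natCast]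
    exact one_le_pow₀ one_le_two
  obtain ⟨i, hi, hyi⟩ := ENNReal.exists_mem_Ioc_zpow h0 htop one_lt_two ofNat_ne_top
  refine le_trans ?_ (ENNReal.le_tsum i)
  rw [if_pos hi, show 2 * i + 2 = (i + 1) + (i + 1) by ring,
    ENNReal.zpow_add two_ne_zero ofNat_ne_top, sq]
  exact mul_le_mul' hyi hyi

lemma tsum_ite_two_zpow_lt_le (y : ℝ≥0∞) :
    ∑' i : ℤ, (if (2:ℝ≥0∞) ^ i < 2 * y then 2 ^ (i + 3) * y else 0) ≤ 32 * y ^ 2 := by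
  rcases eq_or_ne y 0 with rfl | h0
  · simp
  rcases eq_or_ne y ∞ with rfl | htop
  · simp
  obtain ⟨m, hm, hmy⟩ := ENNReal.exists_mem_Ico_zpow (x := 2 * y) (by simp [h0])
    (ENNReal.mul_ne_top ofNat_ne_top htop) one_lt_two ofNat_ne_top
  have hterm : ∀ i : ℤ, (if (2:ℝ≥0∞) ^ i < 2 * y then 2 ^ (i + 3) * y else 0) ≤
      (8 * y) * (if i ≤ m then 2 ^ i else 0) := by
    intro i
    split_ifs with hi him him
    · rw [ENNReal.zpow_add two_ne_zero ofNat_ne_top, show (2:ℝ≥0∞) ^ (3:ℤ) = 8 by norm_num]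
      exact le_of_eq (by ring)
    · exact absurd (hi.trans hmy) (not_lt.2 (ENNReal.zpow_le_of_le one_le_two (by omega)))
    all_goals simp
  calc ∑' i : ℤ, (if (2:ℝ≥0∞) ^ i < 2 * y then 2 ^ (i + 3) * y else 0)
      ≤ ∑' i : ℤ, (8 * y) * (if i ≤ m then (2:ℝ≥0∞) ^ i else 0) := ENNReal.tsum_le_tsum hterm
    _ = 8 * y * (2 * 2 ^ m) := by
        rw [ENNReal.tsum_mul_left, tsum_ite_two_zpow_le, ENNReal.zpow_add two_ne_zero ofNat_ne_top,
          zpow_one, mul_comm (2 ^ m)]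
    _ ≤ 8 * y * (2 * (2 * y)) := by gcongr
    _ = 32 * y ^ 2 := by ring

lemma le_of_sq_le_mul {X K : ℝ≥0∞} (hX : X ≠ ∞) (h : X ^ 2 ≤ K * X) : X ≤ K := by
  rcases eq_or_ne X 0 with rfl | h0
  · exact zero_le
  rw [sq] at h
  exact (ENNReal.mul_le_mul_iff_left h0 hX).1 h

lemma rpow_half_le_mul_rpow_half {a b C : ℝ≥0∞} (h : a ≤ C ^ 2 * b) :
    a ^ (1 / 2 : ℝ) ≤ C * b ^ (1 / 2 : ℝ) :=
  calc a ^ (1 / 2 : ℝ) ≤ (C ^ 2 * b) ^ (1 / 2 : ℝ) := by gcongr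
    _ = C * b ^ (1 / 2 : ℝ) := by
        rw [ENNReal.mul_rpow_of_nonneg _ _ (by norm_num), ← ENNReal.rpow_natCast,
          ← ENNReal.rpow_mul]
        norm_num

section MeasureSpace

variable {α ι : Type*} [MeasurableSpace α] {μ : Measure α}

lemma measure_le_two_mul_diff {s t : Set α}
    (hs : μ s ≠ ∞) (h : μ (t ∩ s) ≤ μ s / 2) : μ s ≤ 2 * μ (s \ t) := by
  have hhalf : μ s / 2 ≠ ∞ := ENNReal.div_ne_top hs two_ne_zero
  have key : μ s / 2 + μ s / 2 ≤ μ s / 2 + μ (s \ t) := by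
    rw [ENNReal.add_halves]
    calc μ s ≤ μ (s ∩ t) + μ (s \ t) := measure_le_inter_add_sdiff μ s t
      _ ≤ μ s / 2 + μ (s \ t) := by rw [inter_comm]; gcongr
  calc μ s = 2 * (μ s / 2) := (ENNReal.mul_div_cancel two_ne_zero ofNat_ne_top).symm
    _ ≤ 2 * μ (s \ t) := by gcongr; exact (ENNReal.add_le_add_iff_left hhalf).1 key

lemma lintegral_mul_sq_le {f g : α → ℝ≥0∞} (hf : AEMeasurable f μ) (hg : AEMeasurable g μ) :
    (∫⁻ x, f x * g x ∂μ) ^ 2 ≤ (∫⁻ x, f x ^ 2 ∂μ) * ∫⁻ x, g x ^ 2 ∂μ := by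
  have h := ENNReal.lintegral_mul_le_Lp_mul_Lq μ Real.HolderConjugate.two_two hf hg
  simp only [Pi.mul_apply, ENNReal.rpow_two] at h
  calc (∫⁻ x, f x * g x ∂μ) ^ 2
      ≤ ((∫⁻ x, f x ^ 2 ∂μ) ^ (1 / 2 : ℝ) * (∫⁻ x, g x ^ 2 ∂μ) ^ (1 / 2 : ℝ)) ^ 2 := by gcongr
    _ = (∫⁻ x, f x ^ 2 ∂μ) * ∫⁻ x, g x ^ 2 ∂μ := by
        rw [mul_pow, ← ENNReal.rpow_mul_natCast, ← ENNReal.rpow_mul_natCast]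
        norm_num

lemma setLIntegral_ne_top_of_lintegral_sq_ne_top {f : α → ℝ≥0∞} (hf : AEMeasurable f μ)
    {s : Set α} (hs : μ s ≠ ∞) (hf2 : ∫⁻ x, f x ^ 2 ∂μ ≠ ∞) : ∫⁻ x in s, f x ∂μ ≠ ∞ := by
  have h := lintegral_mul_sq_le (μ := μ.restrict s) hf.restrict (aemeasurable_const (b := 1))
  simp only [mul_one, one_pow, one_mul, lintegral_const, Measure.restrict_apply_univ] at h
  refine ((pow_ne_top_iff.1 (ne_top_of_le_ne_top ?_ h)).resolve_right two_ne_zero)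
  exact ENNReal.mul_ne_top (ne_top_of_le_ne_top hf2 (setLIntegral_le_lintegral _ _)) hs

lemma lintegral_sq_tsum_eq_iSup [Countable ι] {u : ι → α → ℝ≥0∞} (hu : ∀ i, Measurable (u i)) :
    ∫⁻ x, (∑' i, u i x) ^ 2 ∂μ = ⨆ s : Finset ι, ∫⁻ x, (∑ i ∈ s, u i x) ^ 2 ∂μ := by
  simp_rw [ENNReal.tsum_eq_iSup_sum, ENNReal.iSup_pow]
  refine lintegral_iSup_directed
    (fun s => ((s.measurable_sum fun i _ => hu i).pow_const 2).aemeasurable) ?_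
  exact Monotone.directed_le fun s t hst x => pow_le_pow_left' (Finset.sum_le_sum_of_subset hst) 2

noncomputable def avgIndicator (μ : Measure α) (s : Set α) (f : α → ℝ≥0∞) : α → ℝ≥0∞ :=
  s.indicator fun _ => (∫⁻ y in s, f y ∂μ) / μ s

lemma measurable_avgIndicator {s : Set α} (hs : MeasurableSet s) (f : α → ℝ≥0∞) :
    Measurable (avgIndicator μ s f) :=
  measurable_const.indicator hs

lemma lintegral_avgIndicator_mul {s : Set α} (hs : MeasurableSet s) (f : α → ℝ≥0∞)
    {g : α → ℝ≥0∞} (hg : Measurable g) :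
    ∫⁻ x, avgIndicator μ s f x * g x ∂μ = (∫⁻ y in s, f y ∂μ) / μ s * ∫⁻ y in s, g y ∂μ := by
  simp_rw [avgIndicator, ← indicator_mul_left]
  rw [lintegral_indicator hs, lintegral_const_mul _ hg]

lemma average_mul_setLIntegral_le {s e : Set α} (he : MeasurableSet e)
    (hse : μ s ≤ 2 * μ e) {f g F G : α → ℝ≥0∞}
    (hF : ∀ x ∈ e, (∫⁻ y in s, f y ∂μ) / μ s ≤ F x)
    (hG : ∀ x ∈ e, (∫⁻ y in s, g y ∂μ) / μ s ≤ G x) :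
    (∫⁻ y in s, f y ∂μ) / μ s * ∫⁻ y in s, g y ∂μ ≤ 2 * ∫⁻ x in e, F x * G x ∂μ := by
  -- junk values: `∫_s g = 0` if `μ s = 0`, and the average is `0` if `μ s = ∞`
  rcases eq_or_ne (μ s) 0 with h0 | h0
  · simp [Measure.restrict_eq_zero.2 h0]
  rcases eq_or_ne (μ s) ∞ with htop | htop
  · simp [htop]
  calc (∫⁻ y in s, f y ∂μ) / μ s * ∫⁻ y in s, g y ∂μ
      = (∫⁻ y in s, f y ∂μ) / μ s * ((∫⁻ y in s, g y ∂μ) / μ s) * μ s := by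
        rw [mul_assoc, ENNReal.div_mul_cancel h0 htop]
    _ ≤ (∫⁻ y in s, f y ∂μ) / μ s * ((∫⁻ y in s, g y ∂μ) / μ s) * (2 * μ e) := by gcongr
    _ = 2 * ∫⁻ _ in e, (∫⁻ y in s, f y ∂μ) / μ s * ((∫⁻ y in s, g y ∂μ) / μ s) ∂μ := by
        rw [setLIntegral_const]; ring
    _ ≤ 2 * ∫⁻ x in e, F x * G x ∂μ := by
        gcongr 2 * ?_
        exact setLIntegral_mono' he fun x hx => mul_le_mul' (hF x hx) (hG x hx)

lemma lintegral_tsum_avgIndicator_mul_le [Countable ι] {Q E : ι → Set α}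
    (hQ : ∀ i, MeasurableSet (Q i)) (hE : ∀ i, MeasurableSet (E i))
    (hdisj : Pairwise (Disjoint on E)) (hvol : ∀ i, μ (Q i) ≤ 2 * μ (E i))
    {f g F G : α → ℝ≥0∞} (hg : Measurable g)
    (hF : ∀ i, ∀ x ∈ E i, (∫⁻ y in Q i, f y ∂μ) / μ (Q i) ≤ F x)
    (hG : ∀ i, ∀ x ∈ E i, (∫⁻ y in Q i, g y ∂μ) / μ (Q i) ≤ G x) :
    ∫⁻ x, (∑' i, avgIndicator μ (Q i) f x) * g x ∂μ ≤ 2 * ∫⁻ x, F x * G x ∂μ :=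
  calc ∫⁻ x, (∑' i, avgIndicator μ (Q i) f x) * g x ∂μ
      = ∑' i, (∫⁻ y in Q i, f y ∂μ) / μ (Q i) * ∫⁻ y in Q i, g y ∂μ := by
        simp_rw [← ENNReal.tsum_mul_right]
        rw [lintegral_tsum (f := fun i x => avgIndicator μ (Q i) f x * g x)
          fun i => ((measurable_avgIndicator (hQ i) f).mul hg).aemeasurable]
        exact tsum_congr fun i => lintegral_avgIndicator_mul (hQ i) f hg
    _ ≤ ∑' i, 2 * ∫⁻ x in E i, F x * G x ∂μ :=
        ENNReal.tsum_le_tsum fun i =>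
          average_mul_setLIntegral_le (hE i) (hvol i) (hF i) (hG i)
    _ = 2 * ∫⁻ x in ⋃ i, E i, F x * G x ∂μ := by
        rw [ENNReal.tsum_mul_left, lintegral_iUnion hE hdisj]
    _ ≤ 2 * ∫⁻ x, F x * G x ∂μ := by gcongr; exact Measure.restrict_le_self

noncomputable def familyMaximal (μ : Measure α) (Q : ι → Set α) (f : α → ℝ≥0∞) (x : α) :
    ℝ≥0∞ :=
  ⨆ i, avgIndicator μ (Q i) f x

lemma average_le_familyMaximal {Q : ι → Set α} (f : α → ℝ≥0∞) {i : ι} {x : α}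
    (hx : x ∈ Q i) : (∫⁻ y in Q i, f y ∂μ) / μ (Q i) ≤ familyMaximal μ Q f x :=
  le_iSup_of_le i (by rw [avgIndicator, indicator_of_mem hx])

lemma measurable_familyMaximal [Countable ι] {Q : ι → Set α}
    (hQ : ∀ i, MeasurableSet (Q i)) (f : α → ℝ≥0∞) : Measurable (familyMaximal μ Q f) :=
  .iSup fun i => measurable_avgIndicator (hQ i) f

lemma mul_measure_biUnion_finset_le_of_nested {Q : ι → Set α}
    (hQ : ∀ i, MeasurableSet (Q i))
    (hnest : ∀ i j, Q i ⊆ Q j ∨ Q j ⊆ Q i ∨ Disjoint (Q i) (Q j))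
    {c : ℝ≥0∞} {g : α → ℝ≥0∞} (h : ∀ i, c * μ (Q i) ≤ ∫⁻ x in Q i, g x ∂μ) (s : Finset ι) :
    c * μ (⋃ i ∈ s, Q i) ≤ ∫⁻ x in ⋃ i ∈ s, Q i, g x ∂μ := by
  classical
  induction s using Finset.strongInduction with
  | H s ih =>
  rcases s.eq_empty_or_nonempty with rfl | hs
  · simp
  -- split off a maximal set `Q i`: the others are either inside it or disjoint from it
  obtain ⟨i, his, hmax⟩ := s.exists_maximalFor Q hs
  set t := s.filter fun j => ¬ Q j ⊆ Q i
  have hts : t ⊂ s := Finset.filter_ssubset.2 ⟨i, his, not_not.2 subset_rfl⟩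
  have hU : ⋃ j ∈ s, Q j = Q i ∪ ⋃ j ∈ t, Q j := by
    refine subset_antisymm (iUnion₂_subset fun j hj => ?_) (union_subset ?_ ?_)
    · by_cases hji : Q j ⊆ Q i
      · exact hji.trans subset_union_left
      · exact (subset_biUnion_of_mem (u := Q) (Finset.mem_filter.2 ⟨hj, hji⟩)).trans
          subset_union_right
    · exact subset_biUnion_of_mem (u := Q) his
    · exact biUnion_subset_biUnion_left fun j hj => (Finset.mem_filter.1 hj).1
  have hdisj : Disjoint (Q i) (⋃ j ∈ t, Q j) := by
    refine disjoint_iUnion₂_right.2 fun j hj => ?_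
    obtain ⟨hjs, hji⟩ := Finset.mem_filter.1 hj
    rcases hnest i j with hij | hji' | hd
    · exact absurd (hmax hjs hij) hji
    · exact absurd hji' hji
    · exact hd
  have hUt : MeasurableSet (⋃ j ∈ t, Q j) := Finset.measurableSet_biUnion t fun j _ => hQ j
  rw [hU, measure_union hdisj hUt, mul_add, lintegral_union hUt hdisj]
  exact add_le_add (h i) (ih t hts)

lemma mul_measure_iUnion_le_of_nested [Countable ι] {Q : ι → Set α}
    (hQ : ∀ i, MeasurableSet (Q i))
    (hnest : ∀ i j, Q i ⊆ Q j ∨ Q j ⊆ Q i ∨ Disjoint (Q i) (Q j))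
    {c : ℝ≥0∞} {g : α → ℝ≥0∞} (h : ∀ i, c * μ (Q i) ≤ ∫⁻ x in Q i, g x ∂μ) :
    c * μ (⋃ i, Q i) ≤ ∫⁻ x, g x ∂μ := by
  have hmono : Monotone fun s : Finset ι => ⋃ i ∈ s, Q i :=
    fun s t hst => biUnion_subset_biUnion_left hst
  rw [iUnion_eq_iUnion_finset, hmono.directed_le.measure_iUnion, ENNReal.mul_iSup]
  exact iSup_le fun s => (mul_measure_biUnion_finset_le_of_nested hQ hnest h s).trans
    (setLIntegral_le_lintegral _ _)

lemma mul_measure_le_setLIntegral_of_lt {s : Set α} {f : α → ℝ≥0∞} (hf : Measurable f)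
    {c : ℝ≥0∞} (h : c * μ s < ∫⁻ x in s, f x ∂μ) :
    c * μ s ≤ ∫⁻ x in s, 2 * {y | c < 2 * f y}.indicator f x ∂μ := by
  have hpt : ∀ x, 2 * f x ≤ 2 * {y | c < 2 * f y}.indicator f x + c := by
    intro x
    by_cases hx : c < 2 * f x
    · simp [indicator_of_mem (show x ∈ {y | c < 2 * f y} from hx)]
    · exact (not_lt.1 hx).trans le_add_self
  have hfin : c * μ s ≠ ∞ := (h.trans_le le_top).ne
  refine (ENNReal.add_le_add_iff_right hfin).1 ?_
  calc c * μ s + c * μ s = 2 * (c * μ s) := (two_mul _).symm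
    _ ≤ ∫⁻ x in s, 2 * f x ∂μ := by
        rw [lintegral_const_mul _ hf]; gcongr
    _ ≤ ∫⁻ x in s, (2 * {y | c < 2 * f y}.indicator f x + c) ∂μ := lintegral_mono hpt
    _ = ∫⁻ x in s, 2 * {y | c < 2 * f y}.indicator f x ∂μ + c * μ s := by
        rw [lintegral_add_right _ measurable_const, setLIntegral_const]

lemma mul_measure_lt_familyMaximal_le [Countable ι] {Q : ι → Set α}
    (hQ : ∀ i, MeasurableSet (Q i))
    (hnest : ∀ i j, Q i ⊆ Q j ∨ Q j ⊆ Q i ∨ Disjoint (Q i) (Q j))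
    {f : α → ℝ≥0∞} (hf : Measurable f) (c : ℝ≥0∞) :
    c * μ {x | c < familyMaximal μ Q f x} ≤ 2 * ∫⁻ x in {y | c < 2 * f y}, f x ∂μ := by
  rcases eq_or_ne c 0 with rfl | hc
  · simp
  set S := {i | c * μ (Q i) < ∫⁻ x in Q i, f x ∂μ}
  have hsub : {x | c < familyMaximal μ Q f x} ⊆ ⋃ i : S, Q i := by
    intro x hx
    obtain ⟨i, hi⟩ := lt_iSup_iff.1 (show c < familyMaximal μ Q f x from hx)
    by_cases hxi : x ∈ Q i
    · rw [avgIndicator, indicator_of_mem hxi] at hi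
      exact mem_iUnion.2 ⟨⟨i, (ENNReal.lt_div_iff_mul_lt (.inr hi.ne_top) (.inr hc)).1 hi⟩, hxi⟩
    · simp [avgIndicator, indicator_of_notMem hxi] at hi
  have hA : MeasurableSet {y | c < 2 * f y} := measurableSet_lt measurable_const (hf.const_mul 2)
  calc c * μ {x | c < familyMaximal μ Q f x} ≤ c * μ (⋃ i : S, Q i) := by gcongr
    _ ≤ ∫⁻ x, 2 * {y | c < 2 * f y}.indicator f x ∂μ :=
        mul_measure_iUnion_le_of_nested (Q := fun i : S => Q i) (fun i => hQ i)
          (fun i j => hnest i j)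
          fun i => mul_measure_le_setLIntegral_of_lt hf i.2
    _ = 2 * ∫⁻ x in {y | c < 2 * f y}, f x ∂μ := by
        rw [lintegral_const_mul _ (hf.indicator hA), lintegral_indicator hA]

lemma lintegral_familyMaximal_sq_le [Countable ι] {Q : ι → Set α}
    (hQ : ∀ i, MeasurableSet (Q i))
    (hnest : ∀ i j, Q i ⊆ Q j ∨ Q j ⊆ Q i ∨ Disjoint (Q i) (Q j))
    {f : α → ℝ≥0∞} (hf : Measurable f) :
    ∫⁻ x, familyMaximal μ Q f x ^ 2 ∂μ ≤ 32 * ∫⁻ x, f x ^ 2 ∂μ := by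
  set M := familyMaximal μ Q f
  have hM : Measurable M := measurable_familyMaximal hQ f
  have hMi (i : ℤ) : MeasurableSet {x | (2:ℝ≥0∞) ^ i < M x} :=
    measurableSet_lt measurable_const hM
  have hfi (i : ℤ) : MeasurableSet {x | (2:ℝ≥0∞) ^ i < 2 * f x} :=
    measurableSet_lt measurable_const (hf.const_mul 2)
  calc ∫⁻ x, M x ^ 2 ∂μ
      ≤ ∫⁻ x, ∑' i : ℤ, {x | (2:ℝ≥0∞) ^ i < M x}.indicator (fun _ => 2 ^ (2 * i + 2)) x ∂μ :=
        lintegral_mono fun x => by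
          simpa only [indicator_apply, mem_ofPred_eq] using sq_le_tsum_ite_two_zpow_lt (M x)
    _ = ∑' i : ℤ, 2 ^ (i + 2) * (2 ^ i * μ {x | (2:ℝ≥0∞) ^ i < M x}) := by
        rw [lintegral_tsum fun i => (measurable_const.indicator (hMi i)).aemeasurable]
        refine tsum_congr fun i => ?_
        rw [lintegral_indicator_const (hMi i), ← mul_assoc,
          ← ENNReal.zpow_add two_ne_zero ofNat_ne_top, show i + 2 + i = 2 * i + 2 by ring]
    _ ≤ ∑' i : ℤ, 2 ^ (i + 2) * (2 * ∫⁻ x in {x | (2:ℝ≥0∞) ^ i < 2 * f x}, f x ∂μ) :=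
        ENNReal.tsum_le_tsum fun i =>
          mul_le_mul_right (mul_measure_lt_familyMaximal_le hQ hnest hf _) _
    _ = ∫⁻ x, ∑' i : ℤ,
          {x | (2:ℝ≥0∞) ^ i < 2 * f x}.indicator (fun x => 2 ^ (i + 3) * f x) x ∂μ := by
        rw [lintegral_tsum fun i => ((hf.const_mul _).indicator (hfi i)).aemeasurable]
        refine tsum_congr fun i => ?_
        rw [lintegral_indicator (hfi i), lintegral_const_mul _ hf, ← mul_assoc,
          show i + 3 = (i + 2) + 1 by ring, ENNReal.zpow_add two_ne_zero ofNat_ne_top (i + 2) 1,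
          zpow_one]
    _ ≤ ∫⁻ x, 32 * f x ^ 2 ∂μ :=
        lintegral_mono fun x => by
          simpa only [indicator_apply, mem_ofPred_eq] using tsum_ite_two_zpow_lt_le (f x)
    _ = 32 * ∫⁻ x, f x ^ 2 ∂μ := lintegral_const_mul _ (hf.pow_const 2)

lemma average_ne_top {f : α → ℝ≥0∞} (hf : AEMeasurable f μ) {s : Set α} (hs : μ s ≠ ∞)
    (hf2 : ∫⁻ x, f x ^ 2 ∂μ ≠ ∞) : (∫⁻ y in s, f y ∂μ) / μ s ≠ ∞ := by
  rcases eq_or_ne (μ s) 0 with h0 | h0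
  · simp [Measure.restrict_eq_zero.2 h0]
  exact ENNReal.div_ne_top (setLIntegral_ne_top_of_lintegral_sq_ne_top hf hs hf2) h0

lemma lintegral_sq_sum_avgIndicator_ne_top {Q : ι → Set α} (hQ : ∀ i, MeasurableSet (Q i))
    (hfin : ∀ i, μ (Q i) ≠ ∞) {f : α → ℝ≥0∞} (hf : AEMeasurable f μ)
    (hf2 : ∫⁻ x, f x ^ 2 ∂μ ≠ ∞) (s : Finset ι) :
    ∫⁻ x, (∑ i ∈ s, avgIndicator μ (Q i) f x) ^ 2 ∂μ ≠ ∞ := by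
  set U := ⋃ i ∈ s, Q i
  set K := ∑ i ∈ s, (∫⁻ y in Q i, f y ∂μ) / μ (Q i)
  have hle (x : α) :
      (∑ i ∈ s, avgIndicator μ (Q i) f x) ^ 2 ≤ U.indicator (fun _ => K ^ 2) x := by
    by_cases hx : x ∈ U
    · rw [indicator_of_mem hx]
      exact pow_le_pow_left' (Finset.sum_le_sum fun i _ =>
        indicator_apply_le' (fun _ => le_rfl) fun _ => zero_le) 2
    · have hzero : ∑ i ∈ s, avgIndicator μ (Q i) f x = 0 :=
        Finset.sum_eq_zero fun i hi => indicator_of_notMem (fun hxi => hx (mem_biUnion hi hxi)) _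
      simp [hzero]
  refine ne_top_of_le_ne_top ?_ (lintegral_mono hle)
  rw [lintegral_indicator_const (Finset.measurableSet_biUnion s fun i _ => hQ i)]
  refine ENNReal.mul_ne_top (ENNReal.pow_ne_top ?_) (measure_biUnion_lt_top s.finite_toSet
    fun i _ => (hfin i).lt_top).ne
  exact ENNReal.sum_ne_top.2 fun i _ => average_ne_top hf (hfin i) hf2

lemma lintegral_sq_tsum_avgIndicator_le [Countable ι] {Q E : ι → Set α}
    (hQ : ∀ i, MeasurableSet (Q i)) (hfin : ∀ i, μ (Q i) ≠ ∞)
    (hnest : ∀ i j, Q i ⊆ Q j ∨ Q j ⊆ Q i ∨ Disjoint (Q i) (Q j))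
    (hE : ∀ i, MeasurableSet (E i)) (hEQ : ∀ i, E i ⊆ Q i)
    (hdisj : Pairwise (Disjoint on E)) (hvol : ∀ i, μ (Q i) ≤ 2 * μ (E i))
    {f : α → ℝ≥0∞} (hf : Measurable f) :
    ∫⁻ x, (∑' i, avgIndicator μ (Q i) f x) ^ 2 ∂μ ≤ 4096 * ∫⁻ x, f x ^ 2 ∂μ := by
  rcases eq_or_ne (∫⁻ x, f x ^ 2 ∂μ) ∞ with hf2 | hf2
  · simp [hf2]
  rw [lintegral_sq_tsum_eq_iSup fun i => measurable_avgIndicator (hQ i) f]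
  refine iSup_le fun s => ?_
  set g := fun x => ∑ i ∈ s, avgIndicator μ (Q i) f x
  have hg : Measurable g := s.measurable_sum fun i _ => measurable_avgIndicator (hQ i) f
  have hmax (h : α → ℝ≥0∞) (i : ι) (x : α) (hx : x ∈ E i) :
      (∫⁻ y in Q i, h y ∂μ) / μ (Q i) ≤ familyMaximal μ Q h x :=
    average_le_familyMaximal h (hEQ i hx)
  -- duality: test `A f` against its own truncation `g`, whose square integral is finite
  refine le_of_sq_le_mul (lintegral_sq_sum_avgIndicator_ne_top hQ hfin hf.aemeasurable hf2 s) ?_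
  calc (∫⁻ x, g x ^ 2 ∂μ) ^ 2
      ≤ (∫⁻ x, (∑' i, avgIndicator μ (Q i) f x) * g x ∂μ) ^ 2 := by
        gcongr with x
        rw [sq]
        gcongr
        exact ENNReal.sum_le_tsum s
    _ ≤ (2 * ∫⁻ x, familyMaximal μ Q f x * familyMaximal μ Q g x ∂μ) ^ 2 := by
        gcongr
        exact lintegral_tsum_avgIndicator_mul_le hQ hE hdisj hvol hg (hmax f) (hmax g)
    _ ≤ 4 * ((∫⁻ x, familyMaximal μ Q f x ^ 2 ∂μ) * ∫⁻ x, familyMaximal μ Q g x ^ 2 ∂μ) := by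
        rw [mul_pow]
        gcongr
        · norm_num
        · exact lintegral_mul_sq_le (measurable_familyMaximal hQ f).aemeasurable
            (measurable_familyMaximal hQ g).aemeasurable
    _ ≤ 4 * ((32 * ∫⁻ x, f x ^ 2 ∂μ) * (32 * ∫⁻ x, g x ^ 2 ∂μ)) := by
        gcongr
        · exact lintegral_familyMaximal_sq_le hQ hnest hf
        · exact lintegral_familyMaximal_sq_le hQ hnest hg
    _ = 4096 * (∫⁻ x, f x ^ 2 ∂μ) * ∫⁻ x, g x ^ 2 ∂μ := by ring

end MeasureSpace

section Cubes

variable {n : ℕ}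

lemma cubeOf_eq_pi (a : Fin n → ℝ) (ℓ : ℝ) : cubeOf a ℓ = univ.pi fun i => Ico (a i) (a i + ℓ) := by
  ext y
  simp [cubeOf]

lemma measurableSet_cubeOf (a : Fin n → ℝ) (ℓ : ℝ) : MeasurableSet (cubeOf a ℓ) := by
  rw [cubeOf_eq_pi]
  exact .univ_pi fun _ => measurableSet_Ico

lemma volume_cubeOf_ne_top (a : Fin n → ℝ) (ℓ : ℝ) : volume (cubeOf a ℓ) ≠ ∞ := by
  simp [cubeOf_eq_pi, volume_pi_pi, Real.volume_Ico]

lemma average_cubeOf_le_MHL (f : (Fin n → ℝ) → ℝ≥0∞) {a : Fin n → ℝ} {ℓ : ℝ} (hℓ : 0 < ℓ)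
    {x : Fin n → ℝ} (hx : x ∈ cubeOf a ℓ) :
    (∫⁻ y in cubeOf a ℓ, f y) / volume (cubeOf a ℓ) ≤ MHL f x :=
  le_iSup_of_le a <| le_iSup_of_le ℓ <| le_iSup_of_le hℓ <| le_iSup_of_le hx le_rfl

end Cubes

namespace IsSparseIn

variable {n : ℕ} {D : Set (Set (Fin n → ℝ))} {Q : ℤ → ℕ → Set (Fin n → ℝ)}

lemma exists_eq_cubeOf (hD : IsDyadicGrid D) (hQ : IsSparseIn D Q) {k : ℤ} {j : ℕ}
    (h : (Q k j).Nonempty) : ∃ (a : Fin n → ℝ) (m : ℤ), Q k j = cubeOf a ((2:ℝ) ^ m) :=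
  hD.cube _ ((hQ.mem k j).resolve_right h.ne_empty)

lemma measurableSet (hD : IsDyadicGrid D) (hQ : IsSparseIn D Q) (k : ℤ) (j : ℕ) :
    MeasurableSet (Q k j) := by
  rcases (Q k j).eq_empty_or_nonempty with h | h
  · rw [h]; exact .empty
  obtain ⟨a, m, h⟩ := hQ.exists_eq_cubeOf hD h
  rw [h]; exact measurableSet_cubeOf a _

lemma volume_ne_top (hD : IsDyadicGrid D) (hQ : IsSparseIn D Q) (k : ℤ) (j : ℕ) :
    volume (Q k j) ≠ ∞ := by
  rcases (Q k j).eq_empty_or_nonempty with h | h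
  · simp [h]
  obtain ⟨a, m, h⟩ := hQ.exists_eq_cubeOf hD h
  rw [h]; exact volume_cubeOf_ne_top a _

lemma nested_or_disjoint (hD : IsDyadicGrid D) (hQ : IsSparseIn D Q) (p q : ℤ × ℕ) :
    Q p.1 p.2 ⊆ Q q.1 q.2 ∨ Q q.1 q.2 ⊆ Q p.1 p.2 ∨ Disjoint (Q p.1 p.2) (Q q.1 q.2) := by
  rcases hQ.mem p.1 p.2 with hp | hp
  · rcases hQ.mem q.1 q.2 with hq | hq
    · exact (hD.nested _ hp _ hq).imp_right (Or.imp_right disjoint_iff_inter_eq_empty.2)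
    · simp [hq]
  · simp [hp]

lemma average_le_MHL (hD : IsDyadicGrid D) (hQ : IsSparseIn D Q) (f : (Fin n → ℝ) → ℝ≥0∞)
    {k : ℤ} {j : ℕ} {x : Fin n → ℝ} (hx : x ∈ Q k j) :
    (∫⁻ y in Q k j, f y) / volume (Q k j) ≤ MHL f x := by
  obtain ⟨a, m, h⟩ := hQ.exists_eq_cubeOf hD ⟨x, hx⟩
  rw [h] at hx ⊢
  exact average_cubeOf_le_MHL f (zpow_pos two_pos m) hx

lemma iUnion_subset_iUnion_of_le (hQ : IsSparseIn D Q) {k l : ℤ} (hkl : k ≤ l) :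
    ⋃ j, Q l j ⊆ ⋃ j, Q k j := by
  induction l, hkl using Int.leInduction with
  | base => exact subset_rfl
  | succ l _ ih => exact (hQ.nest l).trans ih

lemma pairwise_disjoint_diff (hQ : IsSparseIn D Q) :
    Pairwise (Disjoint on fun p : ℤ × ℕ => Q p.1 p.2 \ ⋃ j, Q (p.1 + 1) j) := by
  have hlt {p q : ℤ × ℕ} (h : p.1 < q.1) :
      Disjoint (Q p.1 p.2 \ ⋃ j, Q (p.1 + 1) j) (Q q.1 q.2 \ ⋃ j, Q (q.1 + 1) j) :=
    disjoint_sdiff_left.mono_right <| sdiff_subset.trans <|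
      (subset_iUnion (Q q.1) q.2).trans (hQ.iUnion_subset_iUnion_of_le h)
  rintro ⟨k, j⟩ ⟨k', j'⟩ hne
  rcases lt_trichotomy k k' with h | rfl | h
  · exact hlt h
  · exact (hQ.disj k j j' fun h => hne (by rw [h])).mono sdiff_subset sdiff_subset
  · exact (hlt h).symm

lemma measurableSet_diff (hD : IsDyadicGrid D) (hQ : IsSparseIn D Q) (p : ℤ × ℕ) :
    MeasurableSet (Q p.1 p.2 \ ⋃ j, Q (p.1 + 1) j) :=
  (hQ.measurableSet hD _ _).diff (.iUnion fun j => hQ.measurableSet hD _ j)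

lemma volume_le_two_mul_diff (hD : IsDyadicGrid D) (hQ : IsSparseIn D Q) (p : ℤ × ℕ) :
    volume (Q p.1 p.2) ≤ 2 * volume (Q p.1 p.2 \ ⋃ j, Q (p.1 + 1) j) :=
  measure_le_two_mul_diff (hQ.volume_ne_top hD p.1 p.2) (hQ.sparse p.1 p.2)

lemma lintegral_sparseOp_mul_le (hD : IsDyadicGrid D) (hQ : IsSparseIn D Q)
    {f g : (Fin n → ℝ) → ℝ≥0∞} (hg : Measurable g) :
    ∫⁻ x, sparseOp Q f x * g x ≤ 2 * ∫⁻ x, MHL f x * MHL g x :=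
  -- `sparseOp Q f` unfolds to `∑' p, avgIndicator volume (Q p.1 p.2) f`
  lintegral_tsum_avgIndicator_mul_le (Q := fun p : ℤ × ℕ => Q p.1 p.2)
    (fun p => hQ.measurableSet hD p.1 p.2) (hQ.measurableSet_diff hD) hQ.pairwise_disjoint_diff (hQ.volume_le_two_mul_diff hD) hg
    (fun _ _ hx => hQ.average_le_MHL hD f hx.1) (fun _ _ hx => hQ.average_le_MHL hD g hx.1)

lemma lintegral_sparseOp_sq_le (hD : IsDyadicGrid D) (hQ : IsSparseIn D Q)
    {f : (Fin n → ℝ) → ℝ≥0∞} (hf : Measurable f) :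
    ∫⁻ x, sparseOp Q f x ^ 2 ≤ 4096 * ∫⁻ x, f x ^ 2 :=
  lintegral_sq_tsum_avgIndicator_le (Q := fun p : ℤ × ℕ => Q p.1 p.2)
    (fun p => hQ.measurableSet hD p.1 p.2) (fun p => hQ.volume_ne_top hD p.1 p.2)
    (hQ.nested_or_disjoint hD) (hQ.measurableSet_diff hD) (fun _ => sdiff_subset) hQ.pairwise_disjoint_diff (hQ.volume_le_two_mul_diff hD) hf

end IsSparseIn

/-- For a sparse family in a dyadic grid and nonnegative `f, g ∈ L²`:
`∫ (A f) g ≤ 2 ∫ (M f)(M g)`, and consequently `‖A f‖_{L²} ≤ C(n) ‖f‖_{L²}`. -/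
theorem stmt8 (n : ℕ) :
    ∃ C : ℝ≥0, 0 < C ∧
      ∀ (D : Set (Set (Fin n → ℝ))), IsDyadicGrid D →
      ∀ (Q : ℤ → ℕ → Set (Fin n → ℝ)), IsSparseIn D Q →
      ∀ (f g : (Fin n → ℝ) → ℝ≥0∞), Measurable f → Measurable g →
      (∫⁻ x, (f x)^2 < ⊤) → (∫⁻ x, (g x)^2 < ⊤) →
      (∫⁻ x, sparseOp Q f x * g x) ≤ 2 * ∫⁻ x, MHL f x * MHL g x ∧
      (∫⁻ x, (sparseOp Q f x)^2)^(1/2 : ℝ) ≤ C * (∫⁻ x, (f x)^2)^(1/2 : ℝ) := by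
  refine ⟨64, by norm_num, fun D hD Q hQ f g hf hg _ _ => ⟨hQ.lintegral_sparseOp_mul_le hD hg, ?_⟩⟩
  refine rpow_half_le_mul_rpow_half ((hQ.lintegral_sparseOp_sq_le hD hf).trans_eq ?_)
  norm_num
end
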